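/- In the zero-temperature Domany model on the hexagonal lattice ℍ (alternating majority updates on the bipartition classes A and B), every constant-sign s-loop in the triangular sublattice B is stable: if (y₀, …, y_k = y₀) is an s-loop in B with all spins equal, then the spins at y₀, …, y_{k−1} never change at any later time. -/
import Mathlib


open Classical

/-- The three neighbors of a site of the hexagonal lattice `ℍ` in its brick-wall
realization on `ℤ × ℤ`: the two vertical neighbors and one horizontal neighbor whose
direction depends on the parity of the site. -/
noncomputable def hexNbrs (x : ℤ × ℤ) : Finset (ℤ × ℤ) :=
  {(x.1, x.2 + 1), (x.1, x.2 - 1),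
    if Even (x.1 + x.2) then (x.1 + 1, x.2) else (x.1 - 1, x.2)}

/-- Adjacency in the hexagonal lattice. -/
def hexAdj (x y : ℤ × ℤ) : Prop := y ∈ hexNbrs x

/-- The sublattice `A` (even parity); every neighbor of an `A`-site is in `B` and
vice versa. -/
def subA : Set (ℤ × ℤ) := {x | Even (x.1 + x.2)}

/-- The sublattice `B` (odd parity). -/
def subB : Set (ℤ × ℤ) := {x | ¬ Even (x.1 + x.2)}

/-- Zero-temperature majority update of the spins in the subset `S`: a spin in `S` flips
iff at least two of its three neighbors disagree with it; spins outside `S` are unchanged. -/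
noncomputable def majStep (S : Set (ℤ × ℤ)) (σ : ℤ × ℤ → ℤ) (x : ℤ × ℤ) : ℤ :=
  if x ∈ S ∧ 2 ≤ ((hexNbrs x).filter (fun y => σ y ≠ σ x)).card then -σ x else σ x

/-- The zero-temperature Domany (alternating) dynamics: `A`-spins are updated at odd times,
`B`-spins at even times. -/
noncomputable def domany (σ₀ : ℤ × ℤ → ℤ) : ℕ → ℤ × ℤ → ℤ
  | 0 => σ₀
  | n + 1 => majStep (if Even (n + 1) then subB else subA) (domany σ₀ n)

/-- The totally synchronous zero-temperature dynamics: all spins are updated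
simultaneously at each time step. -/
noncomputable def syncTraj (σ₀ : ℤ × ℤ → ℤ) : ℕ → ℤ × ℤ → ℤ
  | 0 => σ₀
  | n + 1 => majStep Set.univ (syncTraj σ₀ n)

lemma card_hexNbrs (x : ℤ × ℤ) : (hexNbrs x).card = 3 := by
  rcases x with ⟨x1, x2⟩
  unfold hexNbrs
  split <;>
  · rw [Finset.card_insert_of_notMem, Finset.card_insert_of_notMem,
      Finset.card_singleton] <;> simp [Prod.ext_iff] <;> omega

lemma hex_symm {x y : ℤ × ℤ} (h : y ∈ hexNbrs x) : x ∈ hexNbrs y := by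
  rcases x with ⟨x1, x2⟩
  simp only [hexNbrs, Finset.mem_insert, Finset.mem_singleton] at h ⊢
  by_cases hx : Even (x1 + x2) <;>
    simp only [hx, if_true, if_false, reduceIte] at h <;>
    rcases h with h | h | h <;> subst h <;>
    simp only [Int.even_iff, Prod.mk.injEq] at hx ⊢ <;> split <;>
    simp [Prod.mk.injEq] <;> omega

/-- If two distinct neighbors agree, fewer than two disagree. -/
lemma count_le_one (σ : ℤ × ℤ → ℤ) (x u v : ℤ × ℤ) (hu : u ∈ hexNbrs x)
    (hv : v ∈ hexNbrs x) (huv : u ≠ v) (hσu : σ u = σ x) (hσv : σ v = σ x) :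
    ¬ 2 ≤ ((hexNbrs x).filter (fun y => σ y ≠ σ x)).card := by
  intro h2
  have hsub : (hexNbrs x).filter (fun y => σ y ≠ σ x) ⊆
      ((hexNbrs x).erase u).erase v := by
    intro z hz
    simp only [Finset.mem_filter] at hz
    refine Finset.mem_erase.2 ⟨?_, Finset.mem_erase.2 ⟨?_, hz.1⟩⟩
    · rintro rfl; exact hz.2 hσv
    · rintro rfl; exact hz.2 hσu
  have h1 : (((hexNbrs x).erase u).erase v).card ≤ 1 := by
    have hvu : v ∈ (hexNbrs x).erase u := Finset.mem_erase.2 ⟨fun h => huv h.symm, hv⟩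
    have := Finset.card_erase_of_mem hvu
    have := Finset.card_erase_of_mem hu
    have := card_hexNbrs x
    omega
  have := Finset.card_le_card hsub
  omega

/-- If two distinct neighbors disagree, at least two disagree. -/
lemma two_le_count (σ : ℤ × ℤ → ℤ) (x u v : ℤ × ℤ) (hu : u ∈ hexNbrs x)
    (hv : v ∈ hexNbrs x) (huv : u ≠ v) (hσu : σ u ≠ σ x) (hσv : σ v ≠ σ x) :
    2 ≤ ((hexNbrs x).filter (fun y => σ y ≠ σ x)).card := by
  have hsub : ({u, v} : Finset (ℤ × ℤ)) ⊆ (hexNbrs x).filter (fun y => σ y ≠ σ x) := by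
    intro z hz
    rcases Finset.mem_insert.1 hz with rfl | hz
    · exact Finset.mem_filter.2 ⟨hu, hσu⟩
    · rw [Finset.mem_singleton] at hz; subst hz
      exact Finset.mem_filter.2 ⟨hv, hσv⟩
  calc 2 = ({u, v} : Finset (ℤ × ℤ)).card := (Finset.card_pair huv).symm
    _ ≤ _ := Finset.card_le_card hsub

lemma majStep_pm (S : Set (ℤ × ℤ)) (σ : ℤ × ℤ → ℤ) (z : ℤ × ℤ)
    (h : σ z = 1 ∨ σ z = -1) : majStep S σ z = 1 ∨ majStep S σ z = -1 := by
  unfold majStep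
  split
  · rcases h with h | h <;> rw [h] <;> norm_num
  · exact h

lemma domany_pm (σ₀ : ℤ × ℤ → ℤ) (hpm : ∀ z, σ₀ z = 1 ∨ σ₀ z = -1) :
    ∀ n z, domany σ₀ n z = 1 ∨ domany σ₀ n z = -1 := by
  intro n
  induction n with
  | zero => exact hpm
  | succ n ih =>
    intro z
    simp only [domany]
    exact majStep_pm _ _ _ (ih z)

/-- In the zero-temperature Domany model on `ℍ`, every constant-sign s-loop in the
triangular sublattice `B` is stable: its spins never change at any later time.  An s-loop
is a loop `(y₀, …, y_k = y₀)`, `k ≥ 3`, of distinct `B`-sites, consecutive sites being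
next-nearest neighbors in `ℍ` with common `A`-neighbor `a i`, the intermediate `A`-sites
being all distinct. -/
theorem sloop_stable (σ₀ : ℤ × ℤ → ℤ) (hpm : ∀ z, σ₀ z = 1 ∨ σ₀ z = -1)
    (k : ℕ) (hk : 3 ≤ k)
    (y : ZMod k → ℤ × ℤ) (hyinj : Function.Injective y) (hyB : ∀ i, y i ∈ subB)
    (a : ZMod k → ℤ × ℤ) (hainj : Function.Injective a) (haA : ∀ i, a i ∈ subA)
    (hadj : ∀ i : ZMod k, hexAdj (a i) (y (i - 1)) ∧ hexAdj (a i) (y i))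
    (hconst : ∀ i : ZMod k, σ₀ (y i) = σ₀ (y 0)) :
    ∀ n : ℕ, ∀ i : ZMod k, domany σ₀ n (y i) = σ₀ (y i) := by
  set s := σ₀ (y 0) with hs
  have hone : (1 : ZMod k) ≠ 0 := by
    intro h
    haveI : NeZero k := ⟨by omega⟩
    have : ((1 : ℕ) : ZMod k) = 0 := by exact_mod_cast h
    have := (ZMod.natCast_eq_zero_iff 1 k).1 this
    have := Nat.le_of_dvd one_pos this
    omega
  have key : ∀ n, (∀ i, domany σ₀ n (y i) = s) ∧
      (¬ Even n → ∀ i, domany σ₀ n (a i) = s) := by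
    intro n
    induction n with
    | zero => exact ⟨hconst, fun h => (h Even.zero).elim⟩
    | succ n ih =>
      by_cases hpar : Even (n + 1)
      · -- B-step; n is odd
        have hodd : ¬ Even n := by
          rcases Nat.even_add_one.1 hpar with h; exact h
        have ha := ih.2 hodd
        have hy := ih.1
        refine ⟨fun i => ?_, fun h => (h hpar).elim⟩
        show majStep (if Even (n + 1) then subB else subA) (domany σ₀ n) (y i) = s
        rw [if_pos hpar]
        unfold majStep
        rw [if_neg, hy i]
        rintro ⟨-, h2⟩
        have hu : a i ∈ hexNbrs (y i) := hex_symm (hadj i).2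
        have hv : a (i + 1) ∈ hexNbrs (y i) := by
          have := (hadj (i + 1)).1
          rw [add_sub_cancel_right] at this
          exact hex_symm this
        have huv : a i ≠ a (i + 1) := by
          intro h
          have := hainj h
          exact hone (by linear_combination -this)
        exact count_le_one (domany σ₀ n) (y i) (a i) (a (i + 1)) hu hv huv
          (by rw [ha i, hy i]) (by rw [ha (i + 1), hy i]) h2
      · -- A-step; n + 1 is odd
        have hy := ih.1
        constructor
        · intro i
          show majStep (if Even (n + 1) then subB else subA) (domany σ₀ n) (y i) = s
          rw [if_neg hpar]
          unfold majStep
          rw [if_neg, hy i]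
          rintro ⟨hmem, -⟩
          exact (hyB i) hmem
        · intro _ i
          show majStep (if Even (n + 1) then subB else subA) (domany σ₀ n) (a i) = s
          rw [if_neg hpar]
          unfold majStep
          have hu : y (i - 1) ∈ hexNbrs (a i) := (hadj i).1
          have hv : y i ∈ hexNbrs (a i) := (hadj i).2
          have huv : y (i - 1) ≠ y i := by
            intro h
            exact hone (sub_eq_self.1 (hyinj h))
          by_cases hsa : domany σ₀ n (a i) = s
          · rw [if_neg, hsa]
            rintro ⟨-, h2⟩
            exact count_le_one (domany σ₀ n) (a i) (y (i - 1)) (y i) hu hv huv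
              (by rw [hy (i - 1), hsa]) (by rw [hy i, hsa]) h2
          · rw [if_pos]
            · rcases domany_pm σ₀ hpm n (a i) with h | h <;>
                rcases hpm (y 0) with h0 | h0 <;>
                rw [h] <;> rw [← hs] at h0 <;> omega
            · refine ⟨haA i, ?_⟩
              exact two_le_count (domany σ₀ n) (a i) (y (i - 1)) (y i) hu hv huv
                (by rw [hy (i - 1)]; exact fun h => hsa h.symm)
                (by rw [hy i]; exact fun h => hsa h.symm)
  intro n i
  rw [(key n).1 i, hconst i]
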